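/- Let Θ be an MLL proof structure such that Algorithm A with input Θ outputs yes. Then every ⅋-link of Θ is consistent in the extreme-left DR-graph S_∀ℓ(Θ): if some ⅋-link L were inconsistent, the rewriting system could not reduce T(Θ) to a one-node tree because the ⅋-elimination rule could never be applied to the ⅋-node n_L. -/

import Mathlib

/-! ## MLL formulas, links, proof structures, proof nets, DR-switchings -/

abbrev Occ := ℕ

/-- MLL formulas over the single atom `p`. -/
inductive MLLFormula : Type
  | pos : MLLFormula
  | neg : MLLFormula
  | tensor : MLLFormula → MLLFormula → MLLFormula
  | par : MLLFormula → MLLFormula → MLLFormula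
deriving DecidableEq

/-- MLL links, given by their occurrences. -/
inductive MLLLink : Type
  | id (c1 c2 : Occ) : MLLLink
  | tensor (l r c : Occ) : MLLLink
  | par (l r c : Occ) : MLLLink
deriving DecidableEq

def MLLLink.prems : MLLLink → List Occ
  | .id _ _ => []
  | .tensor l r _ => [l, r]
  | .par l r _ => [l, r]

def MLLLink.concs : MLLLink → List Occ
  | .id c1 c2 => [c1, c2]
  | .tensor _ _ c => [c]
  | .par _ _ c => [c]

def MLLLink.IsPar : MLLLink → Prop
  | .par _ _ _ => True
  | _ => False

/-- An MLL proof structure: a finite set of links over formula occurrences. -/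
structure ProofStructure where
  links : Finset MLLLink
  form : Occ → MLLFormula
  nodupLink : ∀ L ∈ links, (MLLLink.concs L ++ MLLLink.prems L).Nodup
  formOk : ∀ L ∈ links,
    (∀ c1 c2, L = MLLLink.id c1 c2 → form c1 = MLLFormula.pos ∧ form c2 = MLLFormula.neg) ∧
    (∀ l r c, L = MLLLink.tensor l r c → form c = MLLFormula.tensor (form l) (form r)) ∧
    (∀ l r c, L = MLLLink.par l r c → form c = MLLFormula.par (form l) (form r))
  concUnique : ∀ L1 ∈ links, ∀ L2 ∈ links, ∀ x,
    x ∈ MLLLink.concs L1 → x ∈ MLLLink.concs L2 → L1 = L2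
  premUnique : ∀ L1 ∈ links, ∀ L2 ∈ links, ∀ x,
    x ∈ MLLLink.prems L1 → x ∈ MLLLink.prems L2 → L1 = L2
  premIsConc : ∀ L ∈ links, ∀ x ∈ MLLLink.prems L, ∃ K ∈ links, K ≠ L ∧ x ∈ MLLLink.concs K

/-- The set of occurrences of a set of links. -/
def occsOf (S : Finset MLLLink) : Set Occ :=
  {x | ∃ L ∈ S, x ∈ MLLLink.concs L ∨ x ∈ MLLLink.prems L}

/-- `x` is a conclusion of the set of links `S`, i.e. a conclusion of some link of `S`
that is not a premise of any link of `S`. -/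
def IsConcOfSet (S : Finset MLLLink) (x : Occ) : Prop :=
  (∃ L ∈ S, x ∈ MLLLink.concs L) ∧ ∀ L ∈ S, x ∉ MLLLink.prems L

/-- Sequentializability: the inductive construction of MLL proof nets, mirroring
the ID, ⊗ and ⅋ rules of the MLL sequent calculus. -/
inductive Sequentializable (form : Occ → MLLFormula) : Finset MLLLink → Prop
  | id (c1 c2 : Occ) : c1 ≠ c2 → form c1 = MLLFormula.pos → form c2 = MLLFormula.neg →
      Sequentializable form {MLLLink.id c1 c2}
  | tensor (S1 S2 : Finset MLLLink) (l r c : Occ) :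
      Sequentializable form S1 → Sequentializable form S2 →
      (∀ x, x ∈ occsOf S1 → x ∉ occsOf S2) →
      IsConcOfSet S1 l → IsConcOfSet S2 r →
      c ∉ occsOf S1 → c ∉ occsOf S2 →
      form c = MLLFormula.tensor (form l) (form r) →
      Sequentializable form (insert (MLLLink.tensor l r c) (S1 ∪ S2))
  | par (S : Finset MLLLink) (l r c : Occ) :
      Sequentializable form S →
      l ≠ r → IsConcOfSet S l → IsConcOfSet S r →
      c ∉ occsOf S →
      form c = MLLFormula.par (form l) (form r) →
      Sequentializable form (insert (MLLLink.par l r c) S)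

/-- An MLL proof net is a sequentializable MLL proof structure. -/
def ProofStructure.IsProofNet (Θ : ProofStructure) : Prop :=
  Sequentializable Θ.form Θ.links

/-- The edges contributed by a link under a DR-switching `sw`
(`sw L = false` selects the left premise of a ⅋-link, `true` the right one). -/
def drStep (sw : MLLLink → Bool) (L : MLLLink) (x y : Occ) : Prop :=
  match L with
  | .id c1 c2 => x = c1 ∧ y = c2
  | .tensor l r c => (x = l ∧ y = c) ∨ (x = r ∧ y = c)
  | .par l r c => if sw (MLLLink.par l r c) = true then x = r ∧ y = c else x = l ∧ y = c

/-- The DR-graph of a proof structure under a DR-switching. -/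
def DRGraph (Θ : ProofStructure) (sw : MLLLink → Bool) : SimpleGraph Occ where
  Adj x y := x ≠ y ∧ ∃ L ∈ Θ.links, drStep sw L x y ∨ drStep sw L y x
  symm := by
    constructor
    rintro x y ⟨hxy, L, hL, h⟩
    exact ⟨hxy.symm, L, hL, h.symm⟩
  loopless := by constructor; rintro x ⟨hxx, _⟩; exact hxx rfl

def ProofStructure.occSet (Θ : ProofStructure) : Set Occ := occsOf Θ.links

/-- The extreme left DR-switching `S_∀ℓ`. -/
def extremeLeft : MLLLink → Bool := fun _ => false

/-- The extreme left DR-graph `S_∀ℓ(Θ)`. -/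
def DRGraphL (Θ : ProofStructure) : SimpleGraph Occ := DRGraph Θ extremeLeft

/-- `S_∀ℓ(Θ)` is a tree (on the vertex set of occurrences of `Θ`). -/
def DRTreeL (Θ : ProofStructure) : Prop :=
  ((DRGraphL Θ).induce Θ.occSet).IsTree

/-- Consistency of a ⅋-link with premises `l`, `r` and conclusion `c`:
the unique path in the tree `S_∀ℓ(Θ)` from `l` to `r` does not contain `c`. -/
def ParLinkConsistent (Θ : ProofStructure) (l r c : Occ) : Prop :=
  ∀ p : (DRGraphL Θ).Walk l r, p.IsPath → c ∉ p.support

/-- Every ⅋-link of `Θ` is consistent in `S_∀ℓ(Θ)`. -/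
def AllParConsistent (Θ : ProofStructure) : Prop :=
  ∀ l r c, MLLLink.par l r c ∈ Θ.links → ParLinkConsistent Θ l r c

/-- The edge relation of the directed graph `G(S_∀ℓ(Θ))` on ⅋-links:
`(L1, L2)` is an edge when the unique path in `S_∀ℓ(Θ)` between the premises of `L2`
contains the node of `L1`. -/
def deNMRel (Θ : ProofStructure) (L1 L2 : MLLLink) : Prop :=
  L1 ∈ Θ.links ∧ L2 ∈ Θ.links ∧ L1 ≠ L2 ∧
  ∃ l1 r1 c1, L1 = MLLLink.par l1 r1 c1 ∧
  ∃ l2 r2 c2, L2 = MLLLink.par l2 r2 c2 ∧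
  ∃ p : (DRGraphL Θ).Walk l2 r2, p.IsPath ∧ c1 ∈ p.support

/-- Acyclicity of a directed graph given by a relation. -/
def DirAcyclicRel {α : Type} (R : α → α → Prop) : Prop :=
  ∀ x, ¬ Relation.TransGen R x x

/-- `x` is the left premise of the ⅋-link `P` of `Θ`. -/
def leftPremOfPar (Θ : ProofStructure) (x : Occ) (P : MLLLink) : Prop :=
  P ∈ Θ.links ∧ ∃ r c, P = MLLLink.par x r c

/-- `x` is the right premise of the ⅋-link `P` of `Θ`. -/
def rightPremOfPar (Θ : ProofStructure) (x : Occ) (P : MLLLink) : Prop :=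
  P ∈ Θ.links ∧ ∃ l c, P = MLLLink.par l x c

/-- `x` is a premise of some ⅋-link of `Θ`. -/
def premOfParLink (Θ : ProofStructure) (x : Occ) : Prop :=
  ∃ P, leftPremOfPar Θ x P ∨ rightPremOfPar Θ x P

/-- `x` is a conclusion of the proof structure `Θ`. -/
def IsConcOfTheta (Θ : ProofStructure) (x : Occ) : Prop :=
  IsConcOfSet Θ.links x

/-! ## deNM-trees, the translation T(Θ), the rewriting system, and Algorithm A -/

/-- Labels `ℓ_L` and `r_L` for ⅋-links `L`. -/
inductive DLabel : Type
  | left (L : MLLLink) : DLabel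
  | right (L : MLLLink) : DLabel
deriving DecidableEq

/-- A node of a deNM-tree is either a labeled node carrying a finite label set,
or a ⅋-node labeled by a ⅋-link. -/
inductive DNodeKind : Type
  | labeled (s : Finset DLabel) : DNodeKind
  | par (L : MLLLink) : DNodeKind

/-- The raw data of a deNM-tree: a finite vertex set, a node-kind assignment,
a finite edge set, and for each ⅋-node the neighbour attached at its upper port. -/
structure PreTree where
  V : Finset ℕ
  kind : ℕ → DNodeKind
  edges : Finset (Sym2 ℕ)
  upper : ℕ → Option ℕ

/-- The underlying undirected graph of a deNM-tree. -/
def PreTree.graph (T : PreTree) : SimpleGraph ℕ where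
  Adj x y := x ≠ y ∧ s(x, y) ∈ T.edges
  symm := by
    constructor
    rintro x y ⟨hxy, he⟩
    exact ⟨hxy.symm, by rwa [Sym2.eq_swap]⟩
  loopless := by constructor; rintro x ⟨hxx, _⟩; exact hxx rfl

/-- The degree of a vertex. -/
def PreTree.degree (T : PreTree) (v : ℕ) : ℕ :=
  (T.edges.filter (fun e => v ∈ e)).card

/-- `n` is a labeled node of `T`. -/
def PreTree.IsLabeledVertex (T : PreTree) (n : ℕ) : Prop :=
  n ∈ T.V ∧ ∃ s, T.kind n = DNodeKind.labeled s

/-- `T` is a deNM-tree: a finite tree whose ⅋-nodes have degree 1 or 2 and have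
their upper port attached to a neighbour. -/
def PreTree.IsDeNMTree (T : PreTree) : Prop :=
  (∀ e ∈ T.edges, ∀ x ∈ e, x ∈ T.V) ∧
  (∀ e ∈ T.edges, ¬ e.IsDiag) ∧
  (T.graph.induce (↑T.V : Set ℕ)).IsTree ∧
  ∀ v ∈ T.V, ∀ L, T.kind v = DNodeKind.par L →
    (∃ u ∈ T.V, T.upper v = some u ∧ s(v, u) ∈ T.edges) ∧
    1 ≤ T.degree v ∧ T.degree v ≤ 2

/-- ⅋-consistency of a deNM-tree: for every ⅋-node `v` (for the ⅋-link `L`),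
the unique path between its upper-port neighbour (the left premise position)
and any labeled node carrying `r_L` (the right premise position) avoids `v`. -/
def PreTree.ParConsistentD (T : PreTree) : Prop :=
  ∀ v ∈ T.V, ∀ L, T.kind v = DNodeKind.par L →
    ∀ u, T.upper v = some u →
      ∀ w ∈ T.V, ∀ s, T.kind w = DNodeKind.labeled s → DLabel.right L ∈ s →
        ∀ p : T.graph.Walk u w, p.IsPath → v ∉ p.support

/-- The induced directed relation on ⅋-nodes of a deNM-tree:
`(v1, v2)` when the path between the two premise positions of `v2`'s ⅋-link
passes through `v1`. -/
def PreTree.dirRel (T : PreTree) (v1 v2 : ℕ) : Prop :=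
  v1 ∈ T.V ∧ v2 ∈ T.V ∧ v1 ≠ v2 ∧
  (∃ L1, T.kind v1 = DNodeKind.par L1) ∧
  ∃ L2, T.kind v2 = DNodeKind.par L2 ∧
    ∃ u, T.upper v2 = some u ∧
      ∃ w ∈ T.V, ∃ s, T.kind w = DNodeKind.labeled s ∧ DLabel.right L2 ∈ s ∧
        ∃ p : T.graph.Walk u w, p.IsPath ∧ v1 ∈ p.support

/-- Directed acyclicity of a deNM-tree. -/
def PreTree.DirAcyclicD (T : PreTree) : Prop :=
  ∀ v, ¬ Relation.TransGen T.dirRel v v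

/-! ### The translation `T(Θ)` -/

/-- A ⅋-link of `Θ` gets an auxiliary labeled node exactly when its conclusion is a
premise of another ⅋-link. -/
def hasAux (Θ : ProofStructure) (L : MLLLink) : Prop :=
  L ∈ Θ.links ∧ ∃ l r c, L = MLLLink.par l r c ∧ premOfParLink Θ c

/-- The label contributed by an occurrence `x`: `ℓ_P` if `x` is the left premise of a
⅋-link `P`, `r_P` if `x` is the right premise of `P`. -/
def labelOfOcc (Θ : ProofStructure) (x : Occ) (d : DLabel) : Prop :=
  (∃ P, leftPremOfPar Θ x P ∧ d = DLabel.left P) ∨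
  (∃ P, rightPremOfPar Θ x P ∧ d = DLabel.right P)

/-- The labels carried by the (auxiliary) labeled node of a link `K`:
those contributed by the conclusions of `K`. -/
def linkLabel (Θ : ProofStructure) (K : MLLLink) (d : DLabel) : Prop :=
  ∃ x ∈ MLLLink.concs K, labelOfOcc Θ x d

/-- The node through which the subtree translating `K` connects upwards. -/
def OutIs (Θ : ProofStructure) (main aux : MLLLink → ℕ) (K : MLLLink) (v : ℕ) : Prop :=
  (hasAux Θ K ∧ v = aux K) ∨ (¬ hasAux Θ K ∧ v = main K)

/-- The edges of the translation. -/
def EdgeSpec (Θ : ProofStructure) (main aux : MLLLink → ℕ) (u v : ℕ) : Prop :=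
  (∃ x K M, K ∈ Θ.links ∧ M ∈ Θ.links ∧ x ∈ MLLLink.concs K ∧ x ∈ MLLLink.prems M ∧
      ¬ MLLLink.IsPar M ∧ OutIs Θ main aux K u ∧ v = main M) ∨
  (∃ K l r c, K ∈ Θ.links ∧ MLLLink.par l r c ∈ Θ.links ∧ l ∈ MLLLink.concs K ∧
      OutIs Θ main aux K u ∧ v = main (MLLLink.par l r c)) ∨
  (∃ L, hasAux Θ L ∧ u = main L ∧ v = aux L)

/-- The translation `T(Θ)` is defined: `S_∀ℓ(Θ)` is a tree, no ID-link has both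
conclusions premises of ⅋-links, and no ID-link has one conclusion a conclusion of `Θ`
while the other is a premise of a ⅋-link. -/
def TransDefined (Θ : ProofStructure) : Prop :=
  DRTreeL Θ ∧
  ∀ c1 c2, MLLLink.id c1 c2 ∈ Θ.links →
    ¬(premOfParLink Θ c1 ∧ premOfParLink Θ c2) ∧
    ¬(IsConcOfTheta Θ c1 ∧ premOfParLink Θ c2) ∧
    ¬(IsConcOfTheta Θ c2 ∧ premOfParLink Θ c1)

/-- `T` is (a copy of) the deNM-tree `T(Θ)` translating `Θ`. -/
def IsTranslation (Θ : ProofStructure) (T : PreTree) : Prop :=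
  TransDefined Θ ∧
  ∃ main aux : MLLLink → ℕ,
    (∀ L1 ∈ Θ.links, ∀ L2 ∈ Θ.links, main L1 = main L2 → L1 = L2) ∧
    (∀ L1 L2, hasAux Θ L1 → hasAux Θ L2 → aux L1 = aux L2 → L1 = L2) ∧
    (∀ L1 ∈ Θ.links, ∀ L2, hasAux Θ L2 → main L1 ≠ aux L2) ∧
    (∀ v, v ∈ T.V ↔ ((∃ L ∈ Θ.links, v = main L) ∨ (∃ L, hasAux Θ L ∧ v = aux L))) ∧
    (∀ L ∈ Θ.links, ¬ MLLLink.IsPar L →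
        ∃ s, T.kind (main L) = DNodeKind.labeled s ∧ ∀ d, d ∈ s ↔ linkLabel Θ L d) ∧
    (∀ L ∈ Θ.links, MLLLink.IsPar L → T.kind (main L) = DNodeKind.par L) ∧
    (∀ L, hasAux Θ L →
        ∃ s, T.kind (aux L) = DNodeKind.labeled s ∧ ∀ d, d ∈ s ↔ linkLabel Θ L d) ∧
    (∀ l r c, MLLLink.par l r c ∈ Θ.links →
        ∀ K ∈ Θ.links, l ∈ MLLLink.concs K →
          ∀ u, OutIs Θ main aux K u → T.upper (main (MLLLink.par l r c)) = some u) ∧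
    (∀ e, e ∈ T.edges ↔
        ∃ u v, e = s(u, v) ∧ (EdgeSpec Θ main aux u v ∨ EdgeSpec Θ main aux v u))

/-! ### The rewriting system and Algorithm A -/

def replaceN (v a : ℕ) : ℕ → ℕ := fun x => if x = v then a else x

/-- Eliminate the node `v`, letting `a` absorb the remaining connections of `v`
(used by the ⅋-elimination rule). -/
def PreTree.elimAt (T : PreTree) (v a : ℕ) : PreTree where
  V := T.V.erase v
  kind := T.kind
  edges := (T.edges.image (Sym2.map (replaceN v a))).filter (fun e => ¬ e.IsDiag)
  upper := T.upper

def mergeKind (k k' : DNodeKind) : DNodeKind :=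
  match k, k' with
  | DNodeKind.labeled s, DNodeKind.labeled s' => DNodeKind.labeled (s ∪ s')
  | k, _ => k

/-- Merge the labeled node `n'` into the labeled node `a`, taking the union of the
label sets (used by the union rule). -/
def PreTree.contract (T : PreTree) (a n' : ℕ) : PreTree where
  V := T.V.erase n'
  kind := fun x => if x = a then mergeKind (T.kind a) (T.kind n') else T.kind x
  edges := (T.edges.image (Sym2.map (replaceN n' a))).filter (fun e => ¬ e.IsDiag)
  upper := fun x => (T.upper x).map (replaceN n' a)

/-- The three rewrite rules. -/
inductive RRule : Type
  | elim | union | jump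

/-- A configuration of Algorithm A: the current deNM-tree, the active (labeled)
node, and the set of ⅋-links to which the local jump rule has been applied. -/
structure Config where
  tree : PreTree
  active : ℕ
  jumped : Finset MLLLink

/-- One application of a rewrite rule at the active node. -/
inductive Step : RRule → Config → Config → Prop
  | elim (c : Config) (v : ℕ) (L : MLLLink) (s : Finset DLabel) :
      c.active ∈ c.tree.V → v ∈ c.tree.V →
      c.tree.kind c.active = DNodeKind.labeled s →
      c.tree.kind v = DNodeKind.par L →
      c.tree.upper v = some c.active →
      s(c.active, v) ∈ c.tree.edges →
      DLabel.left L ∈ s → DLabel.right L ∈ s →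
      Step RRule.elim c
        { tree := c.tree.elimAt v c.active, active := c.active, jumped := c.jumped }
  | union (c : Config) (n' : ℕ) (s s' : Finset DLabel) :
      c.active ∈ c.tree.V → n' ∈ c.tree.V → n' ≠ c.active →
      c.tree.kind c.active = DNodeKind.labeled s →
      c.tree.kind n' = DNodeKind.labeled s' →
      s(c.active, n') ∈ c.tree.edges →
      Step RRule.union c
        { tree := c.tree.contract c.active n', active := c.active, jumped := c.jumped }
  | jump (c : Config) (v m : ℕ) (L : MLLLink) (s s' : Finset DLabel) :
      c.active ∈ c.tree.V → v ∈ c.tree.V → m ∈ c.tree.V →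
      c.tree.kind c.active = DNodeKind.labeled s →
      c.tree.kind v = DNodeKind.par L →
      s(c.active, v) ∈ c.tree.edges →
      c.tree.upper v ≠ some c.active →
      c.tree.kind m = DNodeKind.labeled s' →
      DLabel.right L ∈ s' →
      L ∉ c.jumped →
      Step RRule.jump c { tree := c.tree, active := m, jumped := insert L c.jumped }

def StepAny (c c' : Config) : Prop := ∃ r, Step r c c'

/-- No rewrite rule applies. -/
def Stuck (c : Config) : Prop := ∀ r c', ¬ Step r c c'

/-- `s` is the full label set `S_full` of `Θ`. -/
def SfullSpec (Θ : ProofStructure) (s : Finset DLabel) : Prop :=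
  ∀ d, d ∈ s ↔ ∃ l r c, MLLLink.par l r c ∈ Θ.links ∧
    (d = DLabel.left (MLLLink.par l r c) ∨ d = DLabel.right (MLLLink.par l r c))

/-- The terminal tree is a single degree-0 node labeled by `S_full`. -/
def FinalYes (Θ : ProofStructure) (c : Config) : Prop :=
  c.tree.V = {c.active} ∧ c.tree.edges = ∅ ∧
  ∃ s, c.tree.kind c.active = DNodeKind.labeled s ∧ SfullSpec Θ s

/-- Algorithm A with input `Θ` outputs yes. -/
def AlgAYes (Θ : ProofStructure) : Prop :=
  TransDefined Θ ∧
  ∀ T, IsTranslation Θ T → ∀ n, T.IsLabeledVertex n →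
    ∀ c', Relation.ReflTransGen StepAny { tree := T, active := n, jumped := ∅ } c' →
      Stuck c' → FinalYes Θ c'

/-- The local jump rule is applicable (up to the double-application check) at the
active node of `c`, targeting the ⅋-link `L`. -/
def JumpReady (c : Config) (L : MLLLink) : Prop :=
  c.active ∈ c.tree.V ∧ (∃ s, c.tree.kind c.active = DNodeKind.labeled s) ∧
  ∃ v ∈ c.tree.V, c.tree.kind v = DNodeKind.par L ∧
    s(c.active, v) ∈ c.tree.edges ∧ c.tree.upper v ≠ some c.active


/-!
Suppose the ⅋-link `P = (l, r, c)` is inconsistent: the path from `l` to `r` in the tree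
`S_∀ℓ(Θ)` runs through `c`. Every node of `T(Θ)` stands for some occurrences of `Θ`, joined
in `S_∀ℓ(Θ)`, and adjacent nodes share one; so a walk of `T(Θ)` from a node labeled `ℓ_P` to a
node labeled `r_P` that avoids the nodes of `P` would give a second path from `l` to `r`, avoiding
`c`. Hence the ⅋-node of `P` separates `ℓ_P` from `r_P` in `T(Θ)`.

Union and ⅋-elimination merge a node into a neighbour, so walks of the rewritten tree lift to
the old one and the separation persists. In particular ⅋-elimination never removes the node of
`P`: its active node would carry both `ℓ_P` and `r_P`. As the rewriting terminates, Algorithm A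
ends with that ⅋-node still present, not with a single labeled node.
-/

namespace SimpleGraph

variable {V W : Type*} {G : SimpleGraph V}

def JoinedAvoiding (G : SimpleGraph V) (c u v : V) : Prop :=
  ∃ p : G.Walk u v, c ∉ p.support

namespace JoinedAvoiding

variable {c u v w : V}

theorem refl (hu : u ≠ c) : G.JoinedAvoiding c u u :=
  ⟨.nil, by simpa using hu.symm⟩

theorem of_adj (h : G.Adj u v) (hu : u ≠ c) (hv : v ≠ c) : G.JoinedAvoiding c u v :=
  ⟨h.toWalk, by simp [hu.symm, hv.symm]⟩

theorem symm : G.JoinedAvoiding c u v → G.JoinedAvoiding c v u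
  | ⟨p, hp⟩ => ⟨p.reverse, by simpa using hp⟩

theorem trans : G.JoinedAvoiding c u v → G.JoinedAvoiding c v w → G.JoinedAvoiding c u w
  | ⟨p, hp⟩, ⟨q, hq⟩ => ⟨p.append q, by simp [Walk.mem_support_append_iff, hp, hq]⟩

end JoinedAvoiding

theorem Walk.exists_lift {G' : SimpleGraph W} (f : V → W)
    (hfib : ∀ x y, f x = f y → ∃ p : G.Walk x y, ∀ z ∈ p.support, f z = f x)
    (hadj : ∀ x' y', G'.Adj x' y' → ∃ x y, G.Adj x y ∧ f x = x' ∧ f y = y') :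
    ∀ {x' y' : W} (p' : G'.Walk x' y') (x y : V), f x = x' → f y = y' →
      ∃ p : G.Walk x y, ∀ z ∈ p.support, f z ∈ p'.support := by
  intro x' y' p'
  induction p' with
  | nil =>
    rintro x y rfl hy
    obtain ⟨p, hp⟩ := hfib x y hy.symm
    exact ⟨p, fun z hz => by simp [hp z hz]⟩
  | cons h p' ih =>
    rintro x y rfl hy
    obtain ⟨u, v, huv, hu, rfl⟩ := hadj _ _ h
    obtain ⟨q, hq⟩ := hfib x u hu.symm
    obtain ⟨r, hr⟩ := ih v y rfl hy
    refine ⟨q.append (.cons huv r), fun z hz => ?_⟩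
    simp only [Walk.mem_support_append_iff, Walk.support_cons, List.mem_cons] at hz
    rcases hz with hz | rfl | hz
    · simp [hq z hz]
    · simp [hu]
    · exact List.mem_cons_of_mem _ (hr z hz)

theorem Walk.IsPath.notMem_support_of_adj_eq {a v : V}
    (hnbr : ∀ n₁ n₂, G.Adj a n₁ → G.Adj a n₂ → n₁ ≠ v → n₂ ≠ v → n₁ = n₂) :
    ∀ {x y : V} {p : G.Walk x y}, p.IsPath → v ∉ p.support → x ≠ a → y ≠ a → a ∉ p.support
  | _, _, .nil, _, _, hx, _ => by simpa using hx.symm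
  | _, _, .cons _ .nil, _, _, hx, hy => by simp [hx.symm, hy.symm]
  | x, _, .cons (v := x₁) h (.cons (v := x₂) h' p), hp, hv, hx, hy => by
    rw [Walk.cons_isPath_iff] at hp
    have hx₁ : x₁ ≠ a := by
      rintro rfl
      have hxx₂ : x = x₂ := hnbr _ _ h.symm h' (fun e => hv (by simp [e]))
        (fun e => hv (by simp [← e]))
      exact hp.2 (by simp [hxx₂])
    have ih := hp.1.notMem_support_of_adj_eq hnbr (fun e => hv (List.mem_cons_of_mem _ e)) hx₁ hy
    simp only [Walk.support_cons, List.mem_cons, not_or] at ih ⊢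
    exact ⟨hx.symm, ih⟩

theorem IsAcyclic.of_induce {s : Set V} (hs : G.support ⊆ s) (h : (G.induce s).IsAcyclic) :
    G.IsAcyclic := by
  intro v c hc
  have hcs : ∀ x ∈ c.support, x ∈ s := fun x hx =>
    hs (mem_support_of_mem_walk_support c hc.not_nil hx)
  refine h (c.induce s hcs) ?_
  rwa [← Walk.isCycle_map_iff_of_injective (f := (Embedding.induce (G := G) s).toHom)
    (Embedding.induce (G := G) s).injective, Walk.map_induce]

end SimpleGraph

/-! ### The rewriting system -/

theorem replaceN_of_ne {v a x : ℕ} (h : x ≠ v) : replaceN v a x = x := if_neg h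

namespace PreTree

open SimpleGraph

/-- ⅋-elimination and union both merge a node `b` into a neighbour `a`. -/
theorem exists_walk_lift_of_merge {T T' : PreTree} {a b : ℕ} (hab : a ≠ b)
    (he : s(a, b) ∈ T.edges) (hE : ∀ e' ∈ T'.edges, ∃ e ∈ T.edges, e.map (replaceN b a) = e')
    {x' y' : ℕ} (w' : T'.graph.Walk x' y') (x y : ℕ)
    (hx : replaceN b a x = x') (hy : replaceN b a y = y') :
    ∃ w : T.graph.Walk x y, ∀ z ∈ w.support, replaceN b a z ∈ w'.support := by
  refine Walk.exists_lift (replaceN b a) (fun x y hxy => ?_) (fun x' y' h => ?_) w' x y hx hy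
  · by_cases hxy' : x = y
    · subst hxy'
      exact ⟨.nil, by simp⟩
    have hadj : T.graph.Adj x y := ⟨hxy', by
      unfold replaceN at hxy
      split_ifs at hxy <;> subst_vars <;> simp_all [Sym2.eq_swap]⟩
    exact ⟨hadj.toWalk, by simp [hxy]⟩
  · obtain ⟨hne, hmem⟩ := h
    obtain ⟨⟨u, v⟩, he, hmap⟩ := hE _ hmem
    rw [Sym2.map_mk, Sym2.eq_iff] at hmap
    rcases hmap with ⟨rfl, rfl⟩ | ⟨rfl, rfl⟩
    · exact ⟨u, v, ⟨fun h => hne (h ▸ rfl), he⟩, rfl, rfl⟩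
    · exact ⟨v, u, ⟨fun h => hne (h ▸ rfl), by rwa [Sym2.eq_swap]⟩, rfl, rfl⟩

structure ParSeparates (T : PreTree) (P : MLLLink) (v : ℕ) : Prop where
  mem : v ∈ T.V
  kind_eq : T.kind v = .par P
  mem_support : ∀ x ∈ T.V, ∀ y ∈ T.V, ∀ s s', T.kind x = .labeled s → T.kind y = .labeled s' →
    DLabel.left P ∈ s → DLabel.right P ∈ s' → ∀ w : T.graph.Walk x y, v ∈ w.support

theorem ParSeparates.of_merge {T T' : PreTree} {P : MLLLink} {v a b : ℕ}
    (h : T.ParSeparates P v) (hab : a ≠ b) (he : s(a, b) ∈ T.edges)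
    (hE : ∀ e' ∈ T'.edges, ∃ e ∈ T.edges, e.map (replaceN b a) = e')
    (hv : v ∈ T'.V) (hkv : T'.kind v = .par P) (hvb : v ≠ b)
    (hcarrier : ∀ x ∈ T'.V, ∀ s d, T'.kind x = .labeled s → d ∈ s →
      ∃ x₀ ∈ T.V, ∃ s₀, T.kind x₀ = .labeled s₀ ∧ d ∈ s₀ ∧ replaceN b a x₀ = x) :
    T'.ParSeparates P v := by
  refine ⟨hv, hkv, fun x hx y hy s s' hkx hky hls hrs w => ?_⟩
  obtain ⟨x₀, hx₀, s₀, hkx₀, hls₀, rfl⟩ := hcarrier x hx s _ hkx hls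
  obtain ⟨y₀, hy₀, s₀', hky₀, hrs₀, rfl⟩ := hcarrier y hy s' _ hky hrs
  obtain ⟨w₀, hw₀⟩ := exists_walk_lift_of_merge hab he hE w x₀ y₀ rfl rfl
  simpa [replaceN_of_ne hvb] using hw₀ v (h.mem_support x₀ hx₀ y₀ hy₀ s₀ s₀' hkx₀ hky₀ hls₀ hrs₀ w₀)

theorem ParSeparates.elimAt {T : PreTree} {P L : MLLLink} {v₀ a v : ℕ} {s : Finset DLabel}
    (h : T.ParSeparates P v₀) (ha : a ∈ T.V) (hka : T.kind a = .labeled s)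
    (hkv : T.kind v = .par L) (he : s(a, v) ∈ T.edges)
    (hl : DLabel.left L ∈ s) (hr : DLabel.right L ∈ s) :
    (T.elimAt v a).ParSeparates P v₀ := by
  have hav : a ≠ v := by rintro rfl; simp_all
  -- otherwise the trivial walk at `a` would have to pass through the ⅋-node `v₀ = v`
  have hvv₀ : v₀ ≠ v := by
    rintro rfl
    obtain rfl : P = L := by simpa [h.kind_eq] using hkv
    have := h.mem_support a ha a ha s s hka hka hl hr .nil
    simp_all
  refine h.of_merge hav he (fun e' he' => Finset.mem_image.1 (Finset.mem_filter.1 he').1)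
    (Finset.mem_erase.2 ⟨hvv₀, h.mem⟩) h.kind_eq hvv₀ fun x hx s d hkx hd => ?_
  exact ⟨x, Finset.mem_of_mem_erase hx, s, hkx, hd, replaceN_of_ne (Finset.ne_of_mem_erase hx)⟩

theorem ParSeparates.contract {T : PreTree} {P : MLLLink} {v₀ a n : ℕ} {s s' : Finset DLabel}
    (h : T.ParSeparates P v₀) (ha : a ∈ T.V) (hn : n ∈ T.V) (hna : n ≠ a)
    (hka : T.kind a = .labeled s) (hkn : T.kind n = .labeled s') (he : s(a, n) ∈ T.edges) :
    (T.contract a n).ParSeparates P v₀ := by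
  have hkind : ∀ x, (T.contract a n).kind x = if x = a then .labeled (s ∪ s') else T.kind x := by
    intro x
    simp only [PreTree.contract, hka, hkn, mergeKind]
  have hv₀a : v₀ ≠ a := by rintro rfl; simp [h.kind_eq] at hka
  have hv₀n : v₀ ≠ n := by rintro rfl; simp [h.kind_eq] at hkn
  refine h.of_merge hna.symm he (fun e' he' => Finset.mem_image.1 (Finset.mem_filter.1 he').1)
    (Finset.mem_erase.2 ⟨hv₀n, h.mem⟩) (by rw [hkind, if_neg hv₀a, h.kind_eq]) hv₀n
    fun x hx t d hkx hd => ?_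
  rw [hkind] at hkx
  split_ifs at hkx with hxa
  · obtain rfl := DNodeKind.labeled.inj hkx
    rcases Finset.mem_union.1 hd with hd | hd
    · exact ⟨a, ha, s, hka, hd, by rw [replaceN_of_ne hna.symm, hxa]⟩
    · exact ⟨n, hn, s', hkn, hd, by simp [replaceN, hxa]⟩
  · exact ⟨x, Finset.mem_of_mem_erase hx, t, hkx, hd,
      replaceN_of_ne (Finset.ne_of_mem_erase hx)⟩

theorem ParSeparates.not_finalYes {Θ : ProofStructure} {P : MLLLink} {v : ℕ} {cf : Config}
    (h : cf.tree.ParSeparates P v) : ¬ FinalYes Θ cf := by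
  rintro ⟨hV, -, s, hks, -⟩
  obtain rfl : v = cf.active := by simpa [hV] using h.mem
  simpa [hks] using h.kind_eq

end PreTree

theorem Step.parSeparates {P : MLLLink} {v : ℕ} {rule : RRule} {cf cf' : Config}
    (hstep : Step rule cf cf') (h : cf.tree.ParSeparates P v) : cf'.tree.ParSeparates P v := by
  cases hstep with
  | elim _ _ _ _ ha _ hka hkv _ he hl hr => exact h.elimAt ha hka hkv he hl hr
  | union _ _ _ _ ha hn hna hka hkn he => exact h.contract ha hn hna hka hkn he
  | jump => exact h

theorem PreTree.ParSeparates.of_reflTransGen {P : MLLLink} {v : ℕ} {cf cf' : Config}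
    (h : cf.tree.ParSeparates P v) (hreach : Relation.ReflTransGen StepAny cf cf') :
    cf'.tree.ParSeparates P v := by
  induction hreach with
  | refl => exact h
  | tail _ hstep ih => exact hstep.elim fun _ h => h.parSeparates ih

def PreTree.parLinks (T : PreTree) : Finset MLLLink :=
  T.V.biUnion fun v => match T.kind v with
    | .par L => {L}
    | .labeled _ => ∅

theorem PreTree.mem_parLinks {T : PreTree} {L : MLLLink} :
    L ∈ T.parLinks ↔ ∃ v ∈ T.V, T.kind v = .par L := by
  simp only [PreTree.parLinks, Finset.mem_biUnion]
  refine exists_congr fun v => and_congr_right fun _ => ?_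
  cases T.kind v <;> simp [eq_comm]

theorem PreTree.parLinks_mono {T T' : PreTree} (hV : T'.V ⊆ T.V)
    (hk : ∀ v ∈ T'.V, ∀ L, T'.kind v = .par L → T.kind v = .par L) :
    T'.parLinks ⊆ T.parLinks := fun L hL => by
  obtain ⟨v, hv, hkv⟩ := PreTree.mem_parLinks.1 hL
  exact PreTree.mem_parLinks.2 ⟨v, hV hv, hk v hv L hkv⟩

/-- Each rewrite step removes a node or uses up the local jump of a ⅋-link. -/
def Config.size (cf : Config) : ℕ := cf.tree.V.card + (cf.tree.parLinks \ cf.jumped).card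

theorem Step.size_lt {rule : RRule} {cf cf' : Config} (h : Step rule cf cf') :
    cf'.size < cf.size := by
  have herase : ∀ {T' : PreTree} {b : ℕ}, b ∈ cf.tree.V → T'.V = cf.tree.V.erase b →
      (∀ v ∈ T'.V, ∀ L, T'.kind v = .par L → cf.tree.kind v = .par L) →
      T'.V.card + (T'.parLinks \ cf.jumped).card < cf.size := fun hb hV hk => by
    have h₁ := Finset.card_erase_lt_of_mem hb
    have h₂ := Finset.card_le_card (Finset.sdiff_subset_sdiff
      (PreTree.parLinks_mono (hV ▸ Finset.erase_subset _ _) hk) (le_refl cf.jumped))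
    rw [hV]
    unfold Config.size
    omega
  cases h with
  | elim _ v _ _ _ hv => exact herase hv rfl fun _ _ _ h => h
  | union _ n _ _ _ hn _ hka hkn =>
    refine herase hn rfl fun x _ L hx => ?_
    simp only [PreTree.contract] at hx
    split_ifs at hx with hxa
    · simp [hka, hkn, mergeKind] at hx
    · exact hx
  | jump _ v _ L _ _ _ hv _ _ hkv _ _ _ _ hL =>
    have hmem : L ∈ cf.tree.parLinks \ cf.jumped :=
      Finset.mem_sdiff.2 ⟨PreTree.mem_parLinks.2 ⟨v, hv, hkv⟩, hL⟩
    have hsdiff :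
        cf.tree.parLinks \ insert L cf.jumped = (cf.tree.parLinks \ cf.jumped).erase L := by
      ext; simp only [Finset.mem_sdiff, Finset.mem_insert, Finset.mem_erase]; tauto
    simp only [Config.size, hsdiff]
    have := Finset.card_erase_lt_of_mem hmem
    omega

theorem exists_stuck (cf : Config) :
    ∃ cf', Relation.ReflTransGen StepAny cf cf' ∧ Stuck cf' := by
  obtain ⟨cf', hreach, hmin⟩ := (measure Config.size).wf.has_min
    {cf' | Relation.ReflTransGen StepAny cf cf'} ⟨cf, .refl⟩
  exact ⟨cf', hreach, fun rule cf'' h => hmin cf'' (hreach.tail ⟨rule, h⟩) h.size_lt⟩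

/-! ### The extreme left DR-graph -/

namespace MLLLink

/-- The premises that `S_∀ℓ` joins to the conclusion of the link. -/
def drPrems : MLLLink → List Occ
  | .id _ _ => []
  | .tensor l r _ => [l, r]
  | .par l _ _ => [l]

/-- A conclusion through which `S_∀ℓ` connects all occurrences of the link. -/
def hub : MLLLink → Occ
  | .id c _ => c
  | .tensor _ _ c => c
  | .par _ _ c => c

theorem hub_mem_concs (L : MLLLink) : L.hub ∈ L.concs := by
  cases L <;> simp [hub, concs]

theorem mem_prems_of_mem_drPrems {L : MLLLink} {o : Occ} (h : o ∈ L.drPrems) : o ∈ L.prems := by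
  cases L <;> simp_all [drPrems, prems]

theorem mem_drPrems_of_not_isPar {L : MLLLink} {o : Occ} (hL : ¬ L.IsPar) (h : o ∈ L.prems) :
    o ∈ L.drPrems := by
  cases L <;> simp_all [drPrems, prems, IsPar]

end MLLLink

open MLLLink SimpleGraph

theorem drStep_mem_occsOf {S : Finset MLLLink} {sw : MLLLink → Bool} {L : MLLLink} (hL : L ∈ S)
    {x y : Occ} (h : drStep sw L x y) : x ∈ occsOf S ∧ y ∈ occsOf S := by
  have hocc : ∀ o, o ∈ L.concs ∨ o ∈ L.prems → o ∈ occsOf S := fun o ho => ⟨L, hL, ho⟩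
  refine ⟨hocc x ?_, hocc y ?_⟩ <;> cases L <;> simp only [drStep] at h <;>
    (try split_ifs at h) <;> grind [concs, prems]

theorem drStep_extremeLeft_par {l r c x y : Occ} :
    drStep extremeLeft (.par l r c) x y ↔ x = l ∧ y = c := by
  simp [drStep, extremeLeft]

theorem DRTreeL.isAcyclic {Θ : ProofStructure} (h : DRTreeL Θ) : (DRGraphL Θ).IsAcyclic := by
  refine .of_induce (fun x ⟨y, hxy⟩ => ?_) (IsTree.isAcyclic h)
  obtain ⟨-, L, hL, hd | hd⟩ := hxy
  · exact (drStep_mem_occsOf hL hd).1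
  · exact (drStep_mem_occsOf hL hd).2

theorem eq_hub_or_adj_hub {Θ : ProofStructure} {K : MLLLink} (hK : K ∈ Θ.links) {o : Occ}
    (ho : o ∈ K.concs ∨ o ∈ K.drPrems) : o = K.hub ∨ (DRGraphL Θ).Adj o K.hub := by
  have hnd := Θ.nodupLink K hK
  have adj : ∀ {x y}, x ≠ y → drStep extremeLeft K x y ∨ drStep extremeLeft K y x →
      (DRGraphL Θ).Adj x y := fun hxy h => ⟨hxy, K, hK, h⟩
  cases K with
  | id c₁ c₂ =>
    simp only [concs, drPrems, prems, hub, List.mem_cons, List.not_mem_nil, or_false,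
      List.append_nil, List.nodup_cons, List.nodup_nil, and_true] at ho hnd ⊢
    rcases ho with rfl | rfl
    · exact .inl rfl
    · exact .inr (adj (Ne.symm hnd.1) (.inr ⟨rfl, rfl⟩))
  | tensor l r c =>
    simp only [concs, drPrems, prems, hub, List.mem_cons, List.not_mem_nil, or_false,
      List.cons_append, List.nil_append, List.nodup_cons, not_or] at ho hnd ⊢
    rcases ho with rfl | rfl | rfl
    · exact .inl rfl
    · exact .inr (adj (Ne.symm hnd.1.1) (.inl (.inl ⟨rfl, rfl⟩)))
    · exact .inr (adj (Ne.symm hnd.1.2) (.inl (.inr ⟨rfl, rfl⟩)))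
  | par l r c =>
    simp only [concs, drPrems, prems, hub, List.mem_cons, List.not_mem_nil, or_false,
      List.cons_append, List.nil_append, List.nodup_cons, not_or] at ho hnd ⊢
    rcases ho with rfl | rfl
    · exact .inl rfl
    · exact .inr (adj (Ne.symm hnd.1.1) (.inl (drStep_extremeLeft_par.2 ⟨rfl, rfl⟩)))

/-! ### The translation `T(Θ)` -/

namespace MLLLink

def encode : MLLLink → ℕ
  | .id a b => Nat.pair 0 (Nat.pair a b)
  | .tensor a b c => Nat.pair 1 (Nat.pair a (Nat.pair b c))
  | .par a b c => Nat.pair 2 (Nat.pair a (Nat.pair b c))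

theorem encode_injective : Function.Injective encode := by
  intro L₁ L₂ h
  cases L₁ <;> cases L₂ <;> simp_all [encode, Nat.pair_eq_pair]

instance : Nonempty MLLLink := ⟨.id 0 0⟩

/-- Nodes of `T(Θ)` are numbers: even for the node translating a link, odd for the auxiliary
node of a ⅋-link. -/
def mainNode (L : MLLLink) : ℕ := 2 * L.encode

def auxNode (L : MLLLink) : ℕ := 2 * L.encode + 1

/-- The link whose main or auxiliary node is `n` (a junk link if there is none). -/
noncomputable def ofNode (n : ℕ) : MLLLink := Function.invFun encode (n / 2)

theorem mainNode_injective : Function.Injective mainNode :=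
  fun _ _ h => encode_injective (by unfold mainNode at h; omega)

theorem auxNode_injective : Function.Injective auxNode :=
  fun _ _ h => encode_injective (by unfold auxNode at h; omega)

theorem mainNode_ne_auxNode (L₁ L₂ : MLLLink) : L₁.mainNode ≠ L₂.auxNode := by
  unfold mainNode auxNode; omega

theorem ofNode_mainNode (L : MLLLink) : ofNode L.mainNode = L := by
  simp [ofNode, mainNode, Function.leftInverse_invFun encode_injective L]

theorem ofNode_auxNode (L : MLLLink) : ofNode L.auxNode = L := by
  simp [ofNode, auxNode, Nat.mul_add_div, Function.leftInverse_invFun encode_injective L]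

end MLLLink

namespace ProofStructure

variable (Θ : ProofStructure)

noncomputable section

open scoped Classical

def labelSet (K : MLLLink) : Finset DLabel :=
  (Θ.links.image .left ∪ Θ.links.image .right).filter (linkLabel Θ K)

theorem mem_labelSet {K : MLLLink} {d : DLabel} : d ∈ Θ.labelSet K ↔ linkLabel Θ K d := by
  refine ⟨fun h => (Finset.mem_filter.1 h).2, fun h => Finset.mem_filter.2 ⟨?_, h⟩⟩
  obtain ⟨x, -, ⟨P, ⟨hP, -⟩, rfl⟩ | ⟨P, ⟨hP, -⟩, rfl⟩⟩ := h <;> simp [hP]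

def translationVerts : Finset ℕ :=
  Θ.links.image mainNode ∪ (Θ.links.filter (hasAux Θ)).image auxNode

theorem mem_translationVerts {n : ℕ} : n ∈ Θ.translationVerts ↔
    (∃ L ∈ Θ.links, n = L.mainNode) ∨ (∃ L, hasAux Θ L ∧ n = L.auxNode) := by
  simp only [translationVerts, Finset.mem_union, Finset.mem_image, Finset.mem_filter]
  exact or_congr (by simp [eq_comm])
    ⟨fun ⟨L, ⟨_, hL⟩, h⟩ => ⟨L, hL, h.symm⟩, fun ⟨L, hL, h⟩ => ⟨L, ⟨hL.1, hL⟩, h.symm⟩⟩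

def translationKind (n : ℕ) : DNodeKind :=
  if n % 2 = 0 ∧ (ofNode n).IsPar then .par (ofNode n) else .labeled (Θ.labelSet (ofNode n))

theorem translationKind_mainNode (L : MLLLink) :
    Θ.translationKind L.mainNode = if L.IsPar then .par L else .labeled (Θ.labelSet L) := by
  rw [translationKind, ofNode_mainNode]
  simp [mainNode]

theorem translationKind_auxNode (L : MLLLink) :
    Θ.translationKind L.auxNode = .labeled (Θ.labelSet L) := by
  rw [translationKind, ofNode_auxNode]
  simp [auxNode, Nat.add_mod]

/-- The upper port of the ⅋-node of `(l, r, c)` faces the node (auxiliary if there is one, else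
main) of the link concluding `l`. -/
def translationUpper (n : ℕ) : Option ℕ :=
  match ofNode n with
  | .par l _ _ =>
    if h : ∃ K ∈ Θ.links, l ∈ K.concs then
      some (if hasAux Θ h.choose then h.choose.auxNode else h.choose.mainNode)
    else none
  | _ => none

theorem translationUpper_mainNode {l r c : Occ} {K : MLLLink} (hK : K ∈ Θ.links)
    (hl : l ∈ K.concs) {u : ℕ} (hu : OutIs Θ mainNode auxNode K u) :
    Θ.translationUpper (MLLLink.par l r c).mainNode = some u := by
  have h : ∃ K ∈ Θ.links, l ∈ K.concs := ⟨K, hK, hl⟩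
  have hch : h.choose = K := Θ.concUnique _ h.choose_spec.1 _ hK l h.choose_spec.2 hl
  simp only [translationUpper, ofNode_mainNode, dif_pos h, hch]
  rcases hu with ⟨hA, rfl⟩ | ⟨hA, rfl⟩ <;> simp [hA]

theorem edgeSpec_mem_translationVerts {Θ : ProofStructure} {u v : ℕ}
    (h : EdgeSpec Θ mainNode auxNode u v) :
    u ∈ Θ.translationVerts ∧ v ∈ Θ.translationVerts := by
  have hout : ∀ {K w}, K ∈ Θ.links → OutIs Θ mainNode auxNode K w → w ∈ Θ.translationVerts := by
    rintro K w hK (⟨hA, rfl⟩ | ⟨-, rfl⟩)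
    · exact (Θ.mem_translationVerts).2 (.inr ⟨K, hA, rfl⟩)
    · exact (Θ.mem_translationVerts).2 (.inl ⟨K, hK, rfl⟩)
  rcases h with ⟨-, K, M, hK, hM, -, -, -, hu, rfl⟩ | ⟨K, l, r, c, hK, hP, -, hu, rfl⟩ |
    ⟨L, hA, rfl, rfl⟩
  · exact ⟨hout hK hu, (Θ.mem_translationVerts).2 (.inl ⟨M, hM, rfl⟩)⟩
  · exact ⟨hout hK hu, (Θ.mem_translationVerts).2 (.inl ⟨_, hP, rfl⟩)⟩
  · exact ⟨(Θ.mem_translationVerts).2 (.inl ⟨L, hA.1, rfl⟩),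
      (Θ.mem_translationVerts).2 (.inr ⟨L, hA, rfl⟩)⟩

def translationEdges : Finset (Sym2 ℕ) :=
  Θ.translationVerts.sym2.filter fun e =>
    ∃ u v, e = s(u, v) ∧ (EdgeSpec Θ mainNode auxNode u v ∨ EdgeSpec Θ mainNode auxNode v u)

theorem mem_translationEdges {e : Sym2 ℕ} : e ∈ Θ.translationEdges ↔
    ∃ u v, e = s(u, v) ∧ (EdgeSpec Θ mainNode auxNode u v ∨ EdgeSpec Θ mainNode auxNode v u) := by
  refine ⟨fun h => (Finset.mem_filter.1 h).2, fun h => Finset.mem_filter.2 ⟨?_, h⟩⟩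
  obtain ⟨u, v, rfl, h⟩ := h
  exact Finset.mk_mem_sym2_iff.2 <|
    h.elim edgeSpec_mem_translationVerts fun h => (edgeSpec_mem_translationVerts h).symm

def translation : PreTree where
  V := Θ.translationVerts
  kind := Θ.translationKind
  edges := Θ.translationEdges
  upper := Θ.translationUpper

theorem isTranslation_translation (h : TransDefined Θ) : IsTranslation Θ Θ.translation := by
  refine ⟨h, mainNode, auxNode, fun _ _ _ _ h => mainNode_injective h,
    fun _ _ _ _ h => auxNode_injective h, fun L₁ _ L₂ _ => mainNode_ne_auxNode L₁ L₂,
    fun _ => Θ.mem_translationVerts, fun L _ hL => ?_, fun L _ hL => ?_,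
    fun L _ => ⟨_, Θ.translationKind_auxNode L, fun _ => Θ.mem_labelSet⟩,
    fun l r c _ K hK hl u hu => Θ.translationUpper_mainNode hK hl hu,
    fun _ => Θ.mem_translationEdges⟩
  · exact ⟨_, by simp [translation, translationKind_mainNode, hL], fun _ => Θ.mem_labelSet⟩
  · simp [translation, translationKind_mainNode, hL]

end

end ProofStructure

/-! ### Walks of `T(Θ)` as walks of `S_∀ℓ(Θ)` -/

namespace ProofStructure

variable {Θ : ProofStructure}

def IsNodeOf (Θ : ProofStructure) (K : MLLLink) (n : ℕ) : Prop :=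
  n = K.mainNode ∨ (hasAux Θ K ∧ n = K.auxNode)

/-- The occurrences that the node `n` of `T(Θ)` stands for in `S_∀ℓ(Θ)`: the main node of a
link stands for the occurrences that `S_∀ℓ` joins within the link, the auxiliary node of a
⅋-link for its conclusion. -/
def NodeOcc (Θ : ProofStructure) (n : ℕ) (o : Occ) : Prop :=
  (∃ K ∈ Θ.links, n = K.mainNode ∧ (o ∈ K.concs ∨ o ∈ K.drPrems)) ∨
  (∃ K, hasAux Θ K ∧ n = K.auxNode ∧ o ∈ K.concs)

theorem OutIs.isNodeOf {K : MLLLink} {u : ℕ} (h : OutIs Θ mainNode auxNode K u) :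
    IsNodeOf Θ K u :=
  h.elim (fun ⟨hA, hu⟩ => .inr ⟨hA, hu⟩) fun ⟨_, hu⟩ => .inl hu

theorem NodeOcc.of_isNodeOf {K : MLLLink} (hK : K ∈ Θ.links) {n : ℕ} (hn : IsNodeOf Θ K n)
    {o : Occ} (ho : o ∈ K.concs) : NodeOcc Θ n o :=
  hn.elim (fun hn => .inl ⟨K, hK, hn, .inl ho⟩) fun ⟨hA, hn⟩ => .inr ⟨K, hA, hn, ho⟩

theorem eq_hub_of_hasAux {K : MLLLink} (hA : hasAux Θ K) {o : Occ} (ho : o ∈ K.concs) :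
    o = K.hub := by
  obtain ⟨-, l, r, c, rfl, -⟩ := hA
  simpa [concs, hub] using ho

theorem edgeSpec_cases {u v : ℕ} (h : EdgeSpec Θ mainNode auxNode u v) :
    (∃ K ∈ Θ.links, ∃ M ∈ Θ.links, ∃ o ∈ K.concs, o ∈ M.drPrems ∧
      OutIs Θ mainNode auxNode K u ∧ v = M.mainNode) ∨
    (∃ L, hasAux Θ L ∧ u = L.mainNode ∧ v = L.auxNode) := by
  rcases h with ⟨o, K, M, hK, hM, hoK, hoM, hMpar, hu, rfl⟩ | ⟨K, l, r, c, hK, hP, hl, hu, rfl⟩ | h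
  · exact .inl ⟨K, hK, M, hM, o, hoK, mem_drPrems_of_not_isPar hMpar hoM, hu, rfl⟩
  · exact .inl ⟨K, hK, _, hP, l, hl, by simp [drPrems], hu, rfl⟩
  · exact .inr h

theorem edgeSpec_of_adj {u v : ℕ} (h : Θ.translation.graph.Adj u v) :
    EdgeSpec Θ mainNode auxNode u v ∨ EdgeSpec Θ mainNode auxNode v u := by
  obtain ⟨u', v', he, h⟩ := Θ.mem_translationEdges.1 h.2
  rcases Sym2.eq_iff.1 he with ⟨rfl, rfl⟩ | ⟨rfl, rfl⟩
  · exact h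
  · exact h.symm

theorem exists_nodeOcc_of_edgeSpec {u v : ℕ} (h : EdgeSpec Θ mainNode auxNode u v) :
    ∃ K ∈ Θ.links, ∃ o ∈ K.concs, NodeOcc Θ u o ∧ NodeOcc Θ v o ∧
      (IsNodeOf Θ K u ∨ IsNodeOf Θ K v) := by
  rcases edgeSpec_cases h with ⟨K, hK, M, hM, o, hoK, hoM, hu, rfl⟩ | ⟨L, hA, rfl, rfl⟩
  · exact ⟨K, hK, o, hoK, .of_isNodeOf hK (OutIs.isNodeOf hu) hoK, .inl ⟨M, hM, rfl, .inr hoM⟩,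
      .inl (OutIs.isNodeOf hu)⟩
  · exact ⟨L, hA.1, L.hub, L.hub_mem_concs, .of_isNodeOf hA.1 (.inl rfl) L.hub_mem_concs,
      .of_isNodeOf hA.1 (.inr ⟨hA, rfl⟩) L.hub_mem_concs, .inl (.inl rfl)⟩

theorem exists_nodeOcc_of_adj {u v : ℕ} (h : Θ.translation.graph.Adj u v) :
    ∃ K ∈ Θ.links, ∃ o ∈ K.concs, NodeOcc Θ u o ∧ NodeOcc Θ v o ∧
      (IsNodeOf Θ K u ∨ IsNodeOf Θ K v) := by
  rcases edgeSpec_of_adj h with h | h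
  · exact exists_nodeOcc_of_edgeSpec h
  · obtain ⟨K, hK, o, hoK, hv, hu, hKn⟩ := exists_nodeOcc_of_edgeSpec h
    exact ⟨K, hK, o, hoK, hu, hv, hKn.symm⟩

theorem exists_of_adj_auxNode {K : MLLLink} {n : ℕ} (h : Θ.translation.graph.Adj K.auxNode n)
    (hn : n ≠ K.mainNode) : ∃ M ∈ Θ.links, K.hub ∈ M.prems ∧ n = M.mainNode := by
  rcases edgeSpec_of_adj h with h | h <;>
    rcases edgeSpec_cases h with ⟨K', -, M, hM, o, hoK', hoM, hu, hv⟩ | ⟨L, hA, hu, hv⟩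
  · rcases hu with ⟨hA, he⟩ | ⟨-, he⟩
    · obtain rfl := auxNode_injective he
      exact ⟨M, hM, eq_hub_of_hasAux hA hoK' ▸ mem_prems_of_mem_drPrems hoM, hv⟩
    · exact absurd he (mainNode_ne_auxNode _ _).symm
  · exact absurd hu (mainNode_ne_auxNode _ _).symm
  · exact absurd hv (mainNode_ne_auxNode M K).symm
  · obtain rfl := auxNode_injective hv
    exact absurd hu hn

theorem eq_of_adj_auxNode {K : MLLLink} {n₁ n₂ : ℕ} (h₁ : Θ.translation.graph.Adj K.auxNode n₁)
    (h₂ : Θ.translation.graph.Adj K.auxNode n₂) (hn₁ : n₁ ≠ K.mainNode)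
    (hn₂ : n₂ ≠ K.mainNode) : n₁ = n₂ := by
  obtain ⟨M₁, hM₁, hp₁, rfl⟩ := exists_of_adj_auxNode h₁ hn₁
  obtain ⟨M₂, hM₂, hp₂, rfl⟩ := exists_of_adj_auxNode h₂ hn₂
  rw [Θ.premUnique _ hM₁ _ hM₂ _ hp₁ hp₂]

theorem NodeOcc.joinedAvoiding {P : MLLLink} {c : Occ} (hP : P ∈ Θ.links) (hcP : c ∈ P.concs)
    {n : ℕ} (hn : ¬ IsNodeOf Θ P n) {o o' : Occ} (ho : NodeOcc Θ n o) (ho' : NodeOcc Θ n o')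
    (hoc : o ≠ c) (ho'c : o' ≠ c) : (DRGraphL Θ).JoinedAvoiding c o o' := by
  rcases ho with ⟨K, hK, rfl, ho⟩ | ⟨K, hA, rfl, ho⟩ <;>
    rcases ho' with ⟨K', -, he, ho'⟩ | ⟨K', -, he, ho'⟩
  · obtain rfl := mainNode_injective he
    have hhub : K.hub ≠ c := fun h =>
      hn (.inl (by rw [Θ.concUnique _ hK _ hP c (h ▸ K.hub_mem_concs) hcP]))
    have toHub : ∀ {x}, x ∈ K.concs ∨ x ∈ K.drPrems → x ≠ c →
        (DRGraphL Θ).JoinedAvoiding c x K.hub := fun hx hxc =>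
      (eq_hub_or_adj_hub hK hx).elim (fun h => h ▸ .refl hxc) fun h => .of_adj h hxc hhub
    exact (toHub ho hoc).trans (toHub ho' ho'c).symm
  · exact absurd he (mainNode_ne_auxNode _ _)
  · exact absurd he.symm (mainNode_ne_auxNode _ _)
  · obtain rfl := auxNode_injective he
    rw [eq_hub_of_hasAux hA ho, eq_hub_of_hasAux hA ho']
    exact .refl (eq_hub_of_hasAux hA ho ▸ hoc)

theorem joinedAvoiding_of_walk {P : MLLLink} {c : Occ} (hP : P ∈ Θ.links) (hcP : c ∈ P.concs) :
    ∀ {n₁ n₂ : ℕ} (w : Θ.translation.graph.Walk n₁ n₂), (∀ n ∈ w.support, ¬ IsNodeOf Θ P n) →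
      ∀ {o₁ o₂ : Occ}, NodeOcc Θ n₁ o₁ → NodeOcc Θ n₂ o₂ → o₁ ≠ c → o₂ ≠ c →
        (DRGraphL Θ).JoinedAvoiding c o₁ o₂ := by
  intro n₁ n₂ w
  induction w with
  | nil => exact fun hw _ _ h₁ h₂ hc₁ hc₂ => h₁.joinedAvoiding hP hcP (hw _ (by simp)) h₂ hc₁ hc₂
  | cons h w ih =>
    intro hw o₁ o₂ h₁ h₂ hc₁ hc₂
    obtain ⟨K, hK, o, hoK, hu, hv, hKn⟩ := exists_nodeOcc_of_adj h
    have hoc : o ≠ c := by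
      rintro rfl
      obtain rfl := Θ.concUnique _ hK _ hP _ hoK hcP
      exact hKn.elim (hw _ (by simp)) (hw _ (by simp))
    exact (h₁.joinedAvoiding hP hcP (hw _ (by simp)) hu hc₁ hoc).trans
      (ih (fun n hn => hw n (by simp [hn])) hv h₂ hoc hc₂)

theorem exists_link_of_kind_labeled {x : ℕ} {s : Finset DLabel} (hx : x ∈ Θ.translation.V)
    (hk : Θ.translation.kind x = .labeled s) :
    ∃ K ∈ Θ.links, IsNodeOf Θ K x ∧ s = Θ.labelSet K := by
  rcases Θ.mem_translationVerts.1 hx with ⟨K, hK, rfl⟩ | ⟨K, hA, rfl⟩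
  · have hk' : Θ.translationKind K.mainNode = .labeled s := hk
    rw [translationKind_mainNode] at hk'
    split_ifs at hk'
    exact ⟨K, hK, .inl rfl, (DNodeKind.labeled.inj hk').symm⟩
  · have hk' : Θ.translationKind K.auxNode = .labeled s := hk
    rw [translationKind_auxNode] at hk'
    exact ⟨K, hA.1, .inr ⟨hA, rfl⟩, (DNodeKind.labeled.inj hk').symm⟩

theorem linkLabel_left {K : MLLLink} {l r c : Occ} (h : linkLabel Θ K (.left (.par l r c))) :
    l ∈ K.concs := by
  obtain ⟨o, ho, ⟨P, ⟨-, r', c', rfl⟩, he⟩ | ⟨P, -, he⟩⟩ := h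
  · obtain ⟨rfl, -, -⟩ := MLLLink.par.inj (DLabel.left.inj he)
    exact ho
  · cases he

theorem linkLabel_right {K : MLLLink} {l r c : Occ} (h : linkLabel Θ K (.right (.par l r c))) :
    r ∈ K.concs := by
  obtain ⟨o, ho, ⟨P, -, he⟩ | ⟨P, ⟨-, l', c', rfl⟩, he⟩⟩ := h
  · cases he
  · obtain ⟨-, rfl, -⟩ := MLLLink.par.inj (DLabel.right.inj he)
    exact ho

theorem nodeOcc_of_mem_label {P : MLLLink} (hP : P.IsPar) {x : ℕ} {s : Finset DLabel}
    {d : DLabel} {o : Occ} (hx : x ∈ Θ.translation.V) (hk : Θ.translation.kind x = .labeled s)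
    (hd : d ∈ s) (hdo : ∀ K, linkLabel Θ K d → o ∈ K.concs) (hoP : o ∉ P.concs) :
    NodeOcc Θ x o ∧ ¬ IsNodeOf Θ P x := by
  obtain ⟨K, hK, hxK, rfl⟩ := exists_link_of_kind_labeled hx hk
  have hoK := hdo K (Θ.mem_labelSet.1 hd)
  refine ⟨.of_isNodeOf hK hxK hoK, ?_⟩
  rintro (rfl | ⟨-, rfl⟩)
  · have hk' : Θ.translationKind P.mainNode = .labeled (Θ.labelSet K) := hk
    simp [translationKind_mainNode, hP] at hk'
  · rcases hxK with h | ⟨-, h⟩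
    · exact mainNode_ne_auxNode _ _ h.symm
    · exact hoP (auxNode_injective h ▸ hoK)

theorem parSeparates_translation (hT : DRTreeL Θ) {l r c : Occ} (hP : .par l r c ∈ Θ.links)
    (hincons : ¬ ParLinkConsistent Θ l r c) :
    Θ.translation.ParSeparates (.par l r c) (MLLLink.par l r c).mainNode := by
  obtain ⟨p, hp, hcp⟩ : ∃ p : (DRGraphL Θ).Walk l r, p.IsPath ∧ c ∈ p.support := by
    simpa [ParLinkConsistent] using hincons
  have hnd := Θ.nodupLink _ hP
  simp only [concs, prems, List.cons_append, List.nil_append, List.nodup_cons, List.mem_cons,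
    List.not_mem_nil, or_false, not_or] at hnd
  have hlc : l ≠ c := Ne.symm hnd.1.1
  have hrc : r ≠ c := Ne.symm hnd.1.2
  refine ⟨Θ.mem_translationVerts.2 (.inl ⟨_, hP, rfl⟩),
    by simp [translation, translationKind_mainNode, IsPar], ?_⟩
  intro x hx y hy s s' hkx hky hl hr w
  by_contra hw
  obtain ⟨hxl, hxP⟩ := nodeOcc_of_mem_label (P := .par l r c) trivial hx hkx hl
    (fun _ => linkLabel_left) (by simpa [concs] using hlc)
  obtain ⟨hyr, hyP⟩ := nodeOcc_of_mem_label (P := .par l r c) trivial hy hky hr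
    (fun _ => linkLabel_right) (by simpa [concs] using hrc)
  have hbypass : ∀ n ∈ w.bypass.support, ¬ IsNodeOf Θ (.par l r c) n := by
    rintro n hn (rfl | ⟨hA, rfl⟩)
    · exact hw (w.support_bypass_subset_support hn)
    · exact w.bypass_isPath.notMem_support_of_adj_eq (fun _ _ => eq_of_adj_auxNode)
        (fun h => hw (w.support_bypass_subset_support h)) (fun h => hxP (.inr ⟨hA, h⟩))
        (fun h => hyP (.inr ⟨hA, h⟩)) hn
  obtain ⟨q, hq⟩ := joinedAvoiding_of_walk hP (by simp [concs]) w.bypass hbypass hxl hyr hlc hrc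
  obtain rfl : p = q.bypass :=
    congrArg Subtype.val ((hT.isAcyclic.subsingleton_path l r).elim ⟨p, hp⟩ ⟨_, q.bypass_isPath⟩)
  exact hq (q.support_bypass_subset_support hcp)

theorem exists_isLabeledVertex_translation {l r c : Occ} (hP : .par l r c ∈ Θ.links) :
    ∃ n, Θ.translation.IsLabeledVertex n := by
  obtain ⟨K, hK, -, hlK⟩ := Θ.premIsConc _ hP l (by simp [prems])
  by_cases hpar : K.IsPar
  · have hA : hasAux Θ K := by
      cases K with
      | par a b d =>
        obtain rfl : l = d := by simpa [concs] using hlK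
        exact ⟨hK, a, b, l, rfl, _, .inl ⟨hP, r, c, rfl⟩⟩
      | _ => exact absurd hpar id
    exact ⟨K.auxNode, Θ.mem_translationVerts.2 (.inr ⟨K, hA, rfl⟩), _,
      Θ.translationKind_auxNode K⟩
  · exact ⟨K.mainNode, Θ.mem_translationVerts.2 (.inl ⟨K, hK, rfl⟩), Θ.labelSet K,
      by simp [translation, translationKind_mainNode, hpar]⟩

end ProofStructure

/-- If Algorithm A with input Θ outputs yes, then every ⅋-link of Θ is
consistent in the extreme-left DR-graph S_∀ℓ(Θ). -/
theorem algorithm_A_yes_implies_par_consistent (Θ : ProofStructure)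
    (hyes : AlgAYes Θ) :
    AllParConsistent Θ := by
  intro l r c hP
  by_contra hincons
  obtain ⟨hdef, hfinal⟩ := hyes
  obtain ⟨n, hn⟩ := ProofStructure.exists_isLabeledVertex_translation hP
  obtain ⟨cf, hreach, hstuck⟩ := exists_stuck ⟨Θ.translation, n, ∅⟩
  have hsep := ProofStructure.parSeparates_translation hdef.1 hP hincons
  exact (hsep.of_reflTransGen hreach).not_finalYes
    (hfinal _ (Θ.isTranslation_translation hdef) n hn cf hreach hstuck)
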